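/- arXiv:1807.05609 — 10 statements merged into one kernel-verified Lean document; each statement's English description precedes it below -/
import Mathlib

section
/- Updating increases validity: Let ω be a state on a finite type X and let p be a predicate on X with ω ⊨ p ≠ 0. Then ω|_p ⊨ p ≥ ω ⊨ p. -/
/-- A (discrete probability) state on a finite type: nonnegative, sums to 1. -/
def IsState {X : Type*} [Fintype X] (ω : X → ℝ) : Prop :=
  (∀ x, 0 ≤ ω x) ∧ (∑ x, ω x) = 1

/-- A fuzzy predicate: values in the unit interval. -/
def IsPred {X : Type*} (p : X → ℝ) : Prop :=
  ∀ x, 0 ≤ p x ∧ p x ≤ 1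

/-- Validity (expected value) of a predicate in a state: ω ⊨ p. -/
def valid {X : Type*} [Fintype X] (ω p : X → ℝ) : ℝ :=
  ∑ x, ω x * p x

/-- Updated (conditioned) state ω|_p. -/
noncomputable def upd {X : Type*} [Fintype X] (ω p : X → ℝ) : X → ℝ :=
  fun x => ω x * p x / valid ω p

/-- Conjunction of predicates: pointwise multiplication. -/
def pand {X : Type*} (p q : X → ℝ) : X → ℝ := fun x => p x * q x

/-- A channel from X to Y assigns to each x a state on Y. -/
def IsChannel {X Y : Type*} [Fintype Y] (c : X → Y → ℝ) : Prop :=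
  ∀ x, IsState (c x)

/-- State transformation along a channel: c ≫ ω. -/
def stTr {X Y : Type*} [Fintype X] (c : X → Y → ℝ) (ω : X → ℝ) : Y → ℝ :=
  fun y => ∑ x, ω x * c x y

/-- Predicate transformation along a channel: c ≪ q. -/
def pdTr {X Y : Type*} [Fintype Y] (c : X → Y → ℝ) (q : Y → ℝ) : X → ℝ :=
  fun x => ∑ y, c x y * q y

/-- Bayesian inversion (dagger) of a channel c with respect to a prior σ. -/
noncomputable def dagger {X Y : Type*} [Fintype X] (c : X → Y → ℝ) (σ : X → ℝ) :
    Y → X → ℝ :=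
  fun y x => σ x * c x y / stTr c σ y

/-- Composition of channels: (d • c)(x)(z) = ∑ y, c x y * d y z. -/
def chComp {X Y Z : Type*} [Fintype Y] (d : Y → Z → ℝ) (c : X → Y → ℝ) :
    X → Z → ℝ :=
  fun x z => ∑ y, c x y * d y z

/-- Total variation distance between states. -/
def tvDist {X : Type*} [Fintype X] (ω ω' : X → ℝ) : ℝ :=
  ∑ x, |ω x - ω' x|

/-- Deterministic channel associated with a function f : X → I. -/
def detCh {X I : Type*} [DecidableEq I] (f : X → I) : X → I → ℝ :=
  fun x i => if f x = i then 1 else 0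

/-- A state has full support if it is non-zero everywhere. -/
def FullSupport {X : Type*} (σ : X → ℝ) : Prop := ∀ x, σ x ≠ 0

/-- Updating increases validity: ω|_p ⊨ p ≥ ω ⊨ p. -/
theorem update_increases_validity {X : Type*} [Fintype X] (ω p : X → ℝ)
    (hω : IsState ω) (hp : IsPred p) (h : valid ω p ≠ 0) :
    valid ω p ≤ valid (upd ω p) p := by
  have hv : 0 < valid ω p := by
    rcases lt_or_eq_of_le (Finset.sum_nonneg fun x _ =>
      mul_nonneg (hω.1 x) (hp x).1 : (0:ℝ) ≤ valid ω p) with h' | h'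
    · exact h'
    · exact absurd h'.symm h
  have key : (valid ω p) ^ 2 ≤ ∑ x, ω x * p x * p x := by
    have := Finset.sum_sq_le_sum_mul_sum_of_sq_eq_mul Finset.univ
      (r := fun x => ω x * p x) (f := ω) (g := fun x => ω x * p x * p x)
      (fun i _ => hω.1 i) (fun i _ => mul_nonneg (mul_nonneg (hω.1 i) (hp i).1) (hp i).1)
      (fun i _ => by ring)
    calc (valid ω p) ^ 2 ≤ (∑ x, ω x) * ∑ x, ω x * p x * p x := this
      _ = ∑ x, ω x * p x * p x := by rw [hω.2, one_mul]
  have : valid (upd ω p) p = (∑ x, ω x * p x * p x) / valid ω p := by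
    simp only [valid, upd]
    rw [Finset.sum_div]
    congr 1; ext x; ring
  rw [this, le_div_iff₀ hv]
  calc valid ω p * valid ω p = (valid ω p) ^ 2 := by ring
    _ ≤ _ := key
end

section
/- Iterated applications of Pearl's backward inference commute: Let X, Y, Z be finite types, let c be a channel from X to Y and d a channel from X to Z, let ω be a state on X, and let p be a predicate on Y and q a predicate on Z such that ω ⊨ (c ≪ p) & (d ≪ q) ≠ 0. Then (ω|_{c ≪ p})|_{d ≪ q} = ω|_{(c ≪ p) & (d ≪ q)} = (ω|_{d ≪ q})|_{c ≪ p}. -/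
lemma valid_upd {X : Type*} [Fintype X] (ω p q : X → ℝ) :
    valid (upd ω p) q = valid ω (pand p q) / valid ω p := by
  unfold upd pand
  unfold valid
  rw [Finset.sum_div]
  exact Finset.sum_congr rfl fun x _ => by ring

lemma upd_upd {X : Type*} [Fintype X] (ω p q : X → ℝ) (hv : valid ω p ≠ 0) :
    upd (upd ω p) q = upd ω (pand p q) := by
  funext x
  show upd ω p x * q x / valid (upd ω p) q = _
  rw [valid_upd]
  show ω x * p x / valid ω p * q x / _ = ω x * (p x * q x) / valid ω (pand p q)
  rcases eq_or_ne (valid ω (pand p q)) 0 with hw | hw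
  · simp [hw]
  · field_simp

lemma valid_pand_ne_zero {X : Type*} [Fintype X] (ω p q : X → ℝ)
    (hω : ∀ x, 0 ≤ ω x) (hp : ∀ x, 0 ≤ p x)
    (h : valid ω (pand p q) ≠ 0) : valid ω p ≠ 0 := by
  intro hz
  apply h
  unfold valid pand at *
  have hzero : ∀ x ∈ Finset.univ, ω x * p x = 0 := by
    intro x _
    have := (Finset.sum_eq_zero_iff_of_nonneg (fun x _ => mul_nonneg (hω x) (hp x))).mp hz
    exact this x (Finset.mem_univ x)
  apply Finset.sum_eq_zero
  intro x _
  have := hzero x (Finset.mem_univ x)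
  rw [show ω x * (p x * q x) = (ω x * p x) * q x by ring, this, zero_mul]

lemma pdTr_nonneg {X Y : Type*} [Fintype Y] (c : X → Y → ℝ) (p : Y → ℝ)
    (hc : IsChannel c) (hp : IsPred p) : ∀ x, 0 ≤ pdTr c p x := fun x =>
  Finset.sum_nonneg fun y _ => mul_nonneg ((hc x).1 y) (hp y).1

lemma pand_comm {X : Type*} (p q : X → ℝ) : pand p q = pand q p := by
  funext x; exact mul_comm _ _

/-- Iterated applications of Pearl's backward inference commute. -/
theorem pearl_iterated_commute {X Y Z : Type*} [Fintype X] [Fintype Y] [Fintype Z]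
    (c : X → Y → ℝ) (d : X → Z → ℝ) (ω : X → ℝ) (p : Y → ℝ) (q : Z → ℝ)
    (hc : IsChannel c) (hd : IsChannel d) (hω : IsState ω)
    (hp : IsPred p) (hq : IsPred q)
    (h : valid ω (pand (pdTr c p) (pdTr d q)) ≠ 0) :
    upd (upd ω (pdTr c p)) (pdTr d q) = upd ω (pand (pdTr c p) (pdTr d q)) ∧
    upd ω (pand (pdTr c p) (pdTr d q)) = upd (upd ω (pdTr d q)) (pdTr c p) := by
  have hcp := pdTr_nonneg c p hc hp
  have hdq := pdTr_nonneg d q hd hq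
  have h1 : valid ω (pdTr c p) ≠ 0 := valid_pand_ne_zero ω _ _ hω.1 hcp h
  have h' : valid ω (pand (pdTr d q) (pdTr c p)) ≠ 0 := by rwa [pand_comm]
  have h2 : valid ω (pdTr d q) ≠ 0 := valid_pand_ne_zero ω _ _ hω.1 hdq h'
  refine ⟨upd_upd ω _ _ h1, ?_⟩
  rw [upd_upd ω _ _ h2, pand_comm]
end

section
/- Backward inference along a channel equals forward inference along its Bayesian inversion: Let c be a channel from a finite type X to a finite type Y, let σ be a state on X such that τ := c ≫ σ has full support, and let q be a predicate on Y with τ ⊨ q ≠ 0. Then σ|_{c ≪ q} = c†_σ ≫ (τ|_q). -/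
/-- Backward inference along a channel equals forward inference along its
Bayesian inversion: σ|_{c ≪ q} = c†_σ ≫ (τ|_q), where τ = c ≫ σ. -/
theorem backward_as_forward {X Y : Type*} [Fintype X] [Fintype Y]
    (c : X → Y → ℝ) (σ : X → ℝ) (q : Y → ℝ)
    (hc : IsChannel c) (hσ : IsState σ) (hq : IsPred q)
    (hfs : FullSupport (stTr c σ)) (hv : valid (stTr c σ) q ≠ 0) :
    upd σ (pdTr c q) = stTr (dagger c σ) (upd (stTr c σ) q) := by
  have hval : valid σ (pdTr c q) = valid (stTr c σ) q := by
    simp only [valid, pdTr, stTr, Finset.mul_sum, Finset.sum_mul]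
    rw [Finset.sum_comm]
    congr 1; ext y; congr 1; ext x; ring
  funext x
  simp only [upd, stTr, dagger, hval]
  have h : ∀ y, (∑ x', σ x' * c x' y) * q y / valid (stTr c σ) q *
      (σ x * c x y / ∑ x', σ x' * c x' y) = σ x * c x y * q y / valid (stTr c σ) q := by
    intro y
    have h0 : (∑ x', σ x' * c x' y) ≠ 0 := hfs y
    field_simp
  rw [Finset.sum_congr rfl fun y _ => h y]
  rw [← Finset.sum_div]
  congr 1
  simp only [pdTr, Finset.mul_sum]
  congr 1; ext y; ring
end

section
/- Forward inference along a channel equals backward inference along its Bayesian inversion: Let c be a channel from a finite type X to a finite type Y, let σ be a state on X such that τ := c ≫ σ has full support, and let p be a predicate on X with σ ⊨ p ≠ 0. Then c ≫ (σ|_p) = τ|_{c†_σ ≪ p}. -/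
/-- Forward inference along a channel equals backward inference along its
Bayesian inversion: c ≫ (σ|_p) = τ|_{c†_σ ≪ p}, where τ = c ≫ σ. -/
theorem forward_as_backward {X Y : Type*} [Fintype X] [Fintype Y]
    (c : X → Y → ℝ) (σ : X → ℝ) (p : X → ℝ)
    (hc : IsChannel c) (hσ : IsState σ) (hp : IsPred p)
    (hfs : FullSupport (stTr c σ)) (hv : valid σ p ≠ 0) :
    stTr c (upd σ p) = upd (stTr c σ) (pdTr (dagger c σ) p) := by
  have key : ∀ y, stTr c σ y * pdTr (dagger c σ) p y = ∑ x, σ x * p x * c x y := by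
    intro y
    simp only [pdTr, dagger]; rw [Finset.mul_sum]
    congr 1; ext x
    field_simp [hfs y]
  have hval : valid (stTr c σ) (pdTr (dagger c σ) p) = valid σ p := by
    unfold valid
    calc ∑ y, stTr c σ y * pdTr (dagger c σ) p y
        = ∑ y, ∑ x, σ x * p x * c x y := by simp_rw [key]
      _ = ∑ x, ∑ y, σ x * p x * c x y := Finset.sum_comm
      _ = ∑ x, σ x * p x := by
          refine Finset.sum_congr rfl fun x _ => ?_
          rw [← Finset.mul_sum, (hc x).2, mul_one]
  funext y
  rw [stTr, upd, hval, key, Finset.sum_div]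
  refine Finset.sum_congr rfl fun x _ => ?_
  rw [upd, valid]
  ring
end

section
/- Bayesian inversion is an involution: Let c be a channel from a finite type X to a finite type Y and let σ be a state on X such that both σ and τ := c ≫ σ have full support. Then c†_σ ≫ τ = σ, and the double inversion satisfies (c†_σ)†_τ = c, i.e., (c†_σ)†_τ(x)(y) = c(x)(y) for all x ∈ X and y ∈ Y. -/
/-- Bayesian inversion is an involution: c†_σ ≫ τ = σ and (c†_σ)†_τ = c,
where τ = c ≫ σ. -/
theorem dagger_involution {X Y : Type*} [Fintype X] [Fintype Y]
    (c : X → Y → ℝ) (σ : X → ℝ)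
    (hc : IsChannel c) (hσ : IsState σ)
    (hσfs : FullSupport σ) (hτfs : FullSupport (stTr c σ)) :
    stTr (dagger c σ) (stTr c σ) = σ ∧
    (∀ x y, dagger (dagger c σ) (stTr c σ) x y = c x y) := by
  have key : ∀ x y, stTr c σ y * dagger c σ y x = σ x * c x y := by
    intro x y
    have hy := hτfs y
    unfold dagger
    field_simp
  have h1 : stTr (dagger c σ) (stTr c σ) = σ := by
    funext x
    show ∑ y, stTr c σ y * dagger c σ y x = σ x
    rw [Finset.sum_congr rfl (fun y _ => key x y), ← Finset.mul_sum, (hc x).2, mul_one]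
  refine ⟨h1, fun x y => ?_⟩
  show stTr c σ y * dagger c σ y x / stTr (dagger c σ) (stTr c σ) x = c x y
  rw [key, h1]
  have := hσfs x
  field_simp
end

section
/- Bayesian inversion reverses channel composition: Let X, Y, Z be finite types, let c be a channel from X to Y and d a channel from Y to Z, and let σ be a state on X such that c ≫ σ has full support and d ≫ (c ≫ σ) has full support. Then (d • c)†_σ = c†_σ • d†_{c ≫ σ}, i.e., for all z ∈ Z and x ∈ X, (d • c)†_σ(z)(x) = ∑_y d†_{c ≫ σ}(z)(y) · c†_σ(y)(x). -/
/-- Bayesian inversion reverses channel composition: (d • c)†_σ = c†_σ • d†_{c ≫ σ}. -/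
theorem dagger_comp {X Y Z : Type*} [Fintype X] [Fintype Y] [Fintype Z]
    (c : X → Y → ℝ) (d : Y → Z → ℝ) (σ : X → ℝ)
    (hc : IsChannel c) (hd : IsChannel d) (hσ : IsState σ)
    (h1 : FullSupport (stTr c σ)) (h2 : FullSupport (stTr d (stTr c σ))) :
    ∀ z x, dagger (chComp d c) σ z x =
      ∑ y, dagger d (stTr c σ) z y * dagger c σ y x := by

  intro z x
  have hst : stTr (chComp d c) σ z = stTr d (stTr c σ) z := by
    simp only [stTr, chComp, Finset.mul_sum, Finset.sum_mul]
    rw [Finset.sum_comm]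
    simp [mul_assoc]
  rw [dagger, hst]
  have : ∀ y, dagger d (stTr c σ) z y * dagger c σ y x
      = σ x * (c x y * d y z) / stTr d (stTr c σ) z := by
    intro y
    simp only [dagger]
    field_simp [h1 y, h2 z]
  simp only [this, ← Finset.sum_div, ← Finset.mul_sum, chComp]
end

section
/- Jeffrey's updating can be expressed as Pearl's updating: Let c be a channel from a finite type X to a finite type Y, let σ be a state on X such that τ := c ≫ σ has full support, let ρ be a state on Y, and let s ∈ (0,1] be a scalar such that s·ρ(y) ≤ τ(y) for all y ∈ Y. Define the predicate p on Y by p(y) := s·ρ(y)/τ(y). Then σ ⊨ (c ≪ p) = s ≠ 0, and c†_σ ≫ ρ = σ|_{c ≪ p}. -/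
/-- Jeffrey's updating can be expressed as Pearl's updating, via the rescaled
likelihood-ratio predicate p(y) = s·ρ(y)/τ(y). -/
theorem jeffrey_as_pearl {X Y : Type*} [Fintype X] [Fintype Y]
    (c : X → Y → ℝ) (σ : X → ℝ) (ρ : Y → ℝ) (s : ℝ)
    (hc : IsChannel c) (hσ : IsState σ) (hρ : IsState ρ)
    (hfs : FullSupport (stTr c σ))
    (hs0 : 0 < s) (hs1 : s ≤ 1)
    (hle : ∀ y, s * ρ y ≤ stTr c σ y) :
    valid σ (pdTr c (fun y => s * ρ y / stTr c σ y)) = s ∧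
    valid σ (pdTr c (fun y => s * ρ y / stTr c σ y)) ≠ 0 ∧
    stTr (dagger c σ) ρ = upd σ (pdTr c (fun y => s * ρ y / stTr c σ y)) := by

  have hval : valid σ (pdTr c (fun y => s * ρ y / stTr c σ y)) = s := by
    unfold valid pdTr
    simp only [Finset.mul_sum]
    rw [Finset.sum_comm]
    calc (∑ y, ∑ x, σ x * (c x y * (s * ρ y / stTr c σ y)))
          = ∑ y : Y, stTr c σ y * (s * ρ y / stTr c σ y) := by
            refine Finset.sum_congr rfl fun y _ => ?_
            rw [stTr, Finset.sum_mul]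
            exact Finset.sum_congr rfl fun x _ => by ring
        _ = ∑ y : Y, s * ρ y := by
            refine Finset.sum_congr rfl fun y _ => ?_
            field_simp [hfs y]
        _ = s := by rw [← Finset.mul_sum, hρ.2, mul_one]
  refine ⟨hval, by rw [hval]; exact hs0.ne', ?_⟩
  funext x
  rw [upd, hval, stTr]
  have : σ x * pdTr c (fun y => s * ρ y / stTr c σ y) x
      = s * ∑ y, ρ y * dagger c σ y x := by
    rw [pdTr, Finset.mul_sum, Finset.mul_sum]
    refine Finset.sum_congr rfl fun y _ => ?_
    rw [dagger]
    field_simp [hfs y]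
  rw [this, mul_comm s, mul_div_assoc, div_self hs0.ne', mul_one]
end

section
/- Jeffrey's update along a deterministic channel reproduces the evidence state: Let f : X → I be a function between finite types and f̂ the associated deterministic channel. Let ω be a state on X such that f̂ ≫ ω has full support, and let ρ be a state on I. Then f̂ ≫ (f̂†_ω ≫ ρ) = ρ. -/
/-- Jeffrey's update along a deterministic channel reproduces the evidence state:
f̂ ≫ (f̂†_ω ≫ ρ) = ρ. -/
theorem jeffrey_deterministic_reproduces {X I : Type*} [Fintype X] [Fintype I]
    [DecidableEq I] (f : X → I) (ω : X → ℝ) (ρ : I → ℝ)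
    (hω : IsState ω) (hρ : IsState ρ)
    (hfs : FullSupport (stTr (detCh f) ω)) :
    stTr (detCh f) (stTr (dagger (detCh f) ω) ρ) = ρ := by
  funext i
  have key : ∀ x, stTr (dagger (detCh f) ω) ρ x
      = ρ (f x) * ω x / stTr (detCh f) ω (f x) := by
    intro x
    unfold stTr dagger detCh
    rw [Finset.sum_eq_single (f x)]
    · simp [stTr, detCh]; ring
    · intro j _ hj
      simp [Ne.symm hj]
    · simp
  have step : ∀ x, stTr (dagger (detCh f) ω) ρ x * detCh f x i
      = (ρ i / stTr (detCh f) ω i) * (ω x * detCh f x i) := by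
    intro x
    rw [key x]
    unfold detCh
    by_cases h : f x = i
    · rw [h]; simp; ring
    · simp [h]
  show (∑ x, stTr (dagger (detCh f) ω) ρ x * detCh f x i) = ρ i
  simp only [step]
  rw [← Finset.mul_sum]
  exact div_mul_cancel₀ (ρ i) (hfs i)
end

section
/- Jeffrey's update along a deterministic channel minimizes the total variation distance to the prior among all states predicting the evidence: Let f : X → I be a function between finite types and f̂ the associated deterministic channel. Let ω be a state on X such that f̂ ≫ ω has full support, and let ρ be a state on I. Then for every state ω' on X with f̂ ≫ ω' = ρ, one has d(f̂†_ω ≫ ρ, ω) ≤ d(ω', ω); combined with f̂ ≫ (f̂†_ω ≫ ρ) = ρ, this gives d(f̂†_ω ≫ ρ, ω) = ⨅ { d(ω', ω) : ω' a state on X with f̂ ≫ ω' = ρ }. -/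
open Finset in
private lemma stTr_det' {X I : Type*} [Fintype X] [DecidableEq I] (f : X → I) (σ : X → ℝ) (i : I) :
    stTr (detCh f) σ i = ∑ x ∈ Finset.univ.filter (fun x => f x = i), σ x := by
  unfold stTr detCh
  rw [Finset.sum_filter]
  simp [mul_ite]

private lemma sum_fib' {X I : Type*} [Fintype X] [Fintype I] [DecidableEq I] (f : X → I) (g : X → ℝ) :
    ∑ i, ∑ x ∈ Finset.univ.filter (fun x => f x = i), g x = ∑ x, g x := by
  rw [Finset.sum_fiberwise_eq_sum_filter]
  simp

private lemma jeffrey_eq' {X I : Type*} [Fintype X] [Fintype I] [DecidableEq I] (f : X → I)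
    (ω : X → ℝ) (ρ : I → ℝ) (x : X) :
    stTr (dagger (detCh f) ω) ρ x = ρ (f x) * ω x / stTr (detCh f) ω (f x) := by
  show ∑ i, ρ i * dagger (detCh f) ω i x = _
  rw [Finset.sum_eq_single (f x)]
  · simp [dagger, detCh, mul_div_assoc]
  · intro i _ hi
    simp [dagger, detCh, Ne.symm hi]
  · simp

/-- Jeffrey's update along a deterministic channel minimizes the total variation
distance to the prior among all states predicting the evidence. -/
theorem jeffrey_deterministic_minimizes {X I : Type*} [Fintype X] [Fintype I]
    [DecidableEq I] (f : X → I) (ω : X → ℝ) (ρ : I → ℝ)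
    (hω : IsState ω) (hρ : IsState ρ)
    (hfs : FullSupport (stTr (detCh f) ω)) :
    (∀ ω' : X → ℝ, IsState ω' → stTr (detCh f) ω' = ρ →
      tvDist (stTr (dagger (detCh f) ω) ρ) ω ≤ tvDist ω' ω) ∧
    tvDist (stTr (dagger (detCh f) ω) ρ) ω =
      sInf {d : ℝ | ∃ ω' : X → ℝ, IsState ω' ∧ stTr (detCh f) ω' = ρ ∧
        d = tvDist ω' ω} := by
  set m := stTr (detCh f) ω with hm
  set J := stTr (dagger (detCh f) ω) ρ with hJ
  have hm_pos : ∀ i, 0 < m i := by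
    intro i
    have h0 : (0:ℝ) ≤ m i := by
      rw [hm, stTr_det']
      exact Finset.sum_nonneg fun x _ => hω.1 x
    rcases lt_or_eq_of_le h0 with h | h
    · exact h
    · exact absurd h.symm (hfs i)
  -- The TV distance of the Jeffrey update to the prior
  have hA : tvDist J ω = ∑ i, |ρ i - m i| := by
    unfold tvDist
    rw [← sum_fib' f]
    refine Finset.sum_congr rfl fun i _ => ?_
    have hmi := hm_pos i
    have hcong : ∀ x ∈ Finset.univ.filter (fun x => f x = i),
        |J x - ω x| = ω x * (|ρ i - m i| / m i) := by
      intro x hx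
      simp only [Finset.mem_filter] at hx
      rw [hJ, jeffrey_eq', hx.2, ← hm]
      have h1 : ρ i * ω x / m i - ω x = ω x * ((ρ i - m i) / m i) := by
        field_simp
      rw [h1, abs_mul, abs_of_nonneg (hω.1 x), abs_div, abs_of_pos hmi]
    rw [Finset.sum_congr rfl hcong, ← Finset.sum_mul, ← stTr_det', ← hm]
    field_simp
  -- J is a state mapped to ρ
  have hJρ : stTr (detCh f) J = ρ := by
    funext i
    rw [stTr_det']
    have hc : ∀ x ∈ Finset.univ.filter (fun x => f x = i),
        J x = ω x * (ρ i / m i) := by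
      intro x hx
      simp only [Finset.mem_filter] at hx
      rw [hJ, jeffrey_eq', hx.2, ← hm]
      ring
    rw [Finset.sum_congr rfl hc, ← Finset.sum_mul, ← stTr_det', ← hm]
    field_simp
    rw [mul_comm, mul_div_assoc, div_self (hm_pos i).ne', mul_one]
  have hJstate : IsState J := by
    constructor
    · intro x
      rw [hJ, jeffrey_eq', ← hm]
      exact div_nonneg (mul_nonneg (hρ.1 (f x)) (hω.1 x)) (hm_pos (f x)).le
    · rw [← sum_fib' f J]
      have hc : ∀ i ∈ Finset.univ, ∑ x ∈ Finset.univ.filter (fun x => f x = i), J x = ρ i := by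
        intro i _
        rw [← stTr_det', hJρ]
      rw [Finset.sum_congr rfl hc, hρ.2]
  -- lower bound
  have hlb : ∀ ω' : X → ℝ, IsState ω' → stTr (detCh f) ω' = ρ →
      tvDist J ω ≤ tvDist ω' ω := by
    intro ω' hω' hω'ρ
    rw [hA]
    unfold tvDist
    rw [← sum_fib' f]
    refine Finset.sum_le_sum fun i _ => ?_
    calc |ρ i - m i|
        = |∑ x ∈ Finset.univ.filter (fun x => f x = i), (ω' x - ω x)| := by
          rw [Finset.sum_sub_distrib, ← stTr_det', ← stTr_det', hω'ρ, ← hm]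
      _ ≤ ∑ x ∈ Finset.univ.filter (fun x => f x = i), |ω' x - ω x| :=
          Finset.abs_sum_le_sum_abs _ _
  refine ⟨hlb, ?_⟩
  have hmem : tvDist J ω ∈ {d : ℝ | ∃ ω' : X → ℝ, IsState ω' ∧ stTr (detCh f) ω' = ρ ∧
      d = tvDist ω' ω} := ⟨J, hJstate, hJρ, rfl⟩
  have hlb' : ∀ d ∈ {d : ℝ | ∃ ω' : X → ℝ, IsState ω' ∧ stTr (detCh f) ω' = ρ ∧
      d = tvDist ω' ω}, tvDist J ω ≤ d := by
    rintro d ⟨ω', h1, h2, rfl⟩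
    exact hlb ω' h1 h2
  exact le_antisymm (le_csInf ⟨_, hmem⟩ hlb') (csInf_le ⟨_, hlb'⟩ hmem)
end

section
/- Total variation bound for Jeffrey's update along a general channel: Let c be a channel from a finite type X to a finite type Y, let ω be a state on X such that c ≫ ω has full support, and let ρ be a state on Y. Then for every state ω' on X, d(c†_ω ≫ ρ, ω) ≤ d(ω, ω') + d(c ≫ ω', ρ). -/
/-- Total variation bound for Jeffrey's update along a general channel:
d(c†_ω ≫ ρ, ω) ≤ d(ω, ω') + d(c ≫ ω', ρ) for every state ω'. -/
theorem jeffrey_tv_bound {X Y : Type*} [Fintype X] [Fintype Y]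
    (c : X → Y → ℝ) (ω : X → ℝ) (ρ : Y → ℝ)
    (hc : IsChannel c) (hω : IsState ω) (hρ : IsState ρ)
    (hfs : FullSupport (stTr c ω)) :
    ∀ ω' : X → ℝ, IsState ω' →
      tvDist (stTr (dagger c ω) ρ) ω ≤ tvDist ω ω' + tvDist (stTr c ω') ρ := by
  intro ω' hω'
  have hden : ∀ y, (0:ℝ) ≤ stTr c ω y := fun y =>
    Finset.sum_nonneg fun x _ => mul_nonneg (hω.1 x) ((hc x).1 y)
  have hdag_nonneg : ∀ y x, 0 ≤ dagger c ω y x := fun y x =>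
    div_nonneg (mul_nonneg (hω.1 x) ((hc x).1 y)) (hden y)
  have hdag_sum : ∀ y, ∑ x, dagger c ω y x = 1 := by
    intro y
    unfold dagger
    rw [← Finset.sum_div]
    exact div_self (hfs y)
  have hω_expand : ∀ x, ω x = ∑ y, stTr c ω y * dagger c ω y x := by
    intro x
    have : ∀ y, stTr c ω y * dagger c ω y x = ω x * c x y := by
      intro y
      unfold dagger
      rw [mul_comm, div_mul_cancel₀ _ (hfs y)]
    rw [Finset.sum_congr rfl fun y _ => this y, ← Finset.mul_sum, (hc x).2, mul_one]
  -- Step 1: tvDist J ω ≤ ∑_y |ρ y - stTr c ω y|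
  have step1 : tvDist (stTr (dagger c ω) ρ) ω ≤ ∑ y, |ρ y - stTr c ω y| := by
    unfold tvDist stTr
    calc ∑ x, |∑ y, ρ y * dagger c ω y x - ω x|
        = ∑ x, |∑ y, (ρ y - stTr c ω y) * dagger c ω y x| := by
          apply Finset.sum_congr rfl
          intro x _
          rw [hω_expand x, ← Finset.sum_sub_distrib]
          congr 1
          apply Finset.sum_congr rfl
          intro y _
          ring
      _ ≤ ∑ x, ∑ y, |ρ y - stTr c ω y| * dagger c ω y x := by
          apply Finset.sum_le_sum
          intro x _
          refine (Finset.abs_sum_le_sum_abs _ _).trans ?_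
          apply Finset.sum_le_sum
          intro y _
          rw [abs_mul, abs_of_nonneg (hdag_nonneg y x)]
      _ = ∑ y, |ρ y - stTr c ω y| := by
          rw [Finset.sum_comm]
          apply Finset.sum_congr rfl
          intro y _
          rw [← Finset.mul_sum, hdag_sum y, mul_one]
  -- Step 2: data processing
  have step2 : ∑ y, |stTr c ω y - stTr c ω' y| ≤ tvDist ω ω' := by
    unfold tvDist stTr
    calc ∑ y, |∑ x, ω x * c x y - ∑ x, ω' x * c x y|
        = ∑ y, |∑ x, (ω x - ω' x) * c x y| := by
          apply Finset.sum_congr rfl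
          intro y _
          rw [← Finset.sum_sub_distrib]
          congr 1
          apply Finset.sum_congr rfl
          intro x _
          ring
      _ ≤ ∑ y, ∑ x, |ω x - ω' x| * c x y := by
          apply Finset.sum_le_sum
          intro y _
          refine (Finset.abs_sum_le_sum_abs _ _).trans ?_
          apply Finset.sum_le_sum
          intro x _
          rw [abs_mul, abs_of_nonneg ((hc x).1 y)]
      _ = ∑ x, |ω x - ω' x| := by
          rw [Finset.sum_comm]
          apply Finset.sum_congr rfl
          intro x _
          rw [← Finset.mul_sum, (hc x).2, mul_one]
  have step3 : ∑ y, |ρ y - stTr c ω y| ≤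
      (∑ y, |stTr c ω y - stTr c ω' y|) + tvDist (stTr c ω') ρ := by
    unfold tvDist
    rw [← Finset.sum_add_distrib]
    apply Finset.sum_le_sum
    intro y _
    calc |ρ y - stTr c ω y| ≤ |ρ y - stTr c ω' y| + |stTr c ω' y - stTr c ω y| :=
          abs_sub_le _ _ _
      _ = |stTr c ω y - stTr c ω' y| + |stTr c ω' y - ρ y| := by
          rw [abs_sub_comm (ρ y), abs_sub_comm (stTr c ω' y) (stTr c ω y)]
          ring
  linarith
end
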